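/- Let u, S₁, S₂ be smooth ℝ³-valued fields on ℝ × ℝ³ such that the one-forms S₁·dx and S₂·dx are both Lie dragged by the flow, i.e. ∂S_i/∂t − u×(∇×S_i) + ∇(u·S_i) = 0 for i = 1, 2. Then the two-form (S₁×S₂)·dS is Lie dragged by the flow: the field C = S₁ × S₂ satisfies ∂C/∂t − ∇×(u×C) + u(∇·C) = 0. -/

import Mathlib

noncomputable section

/-- Vectors in ℝ³. -/
abbrev Vec3 : Type := Fin 3 → ℝ

/-- Points of space-time: `(t, x)` with `t : ℝ`, `x : Fin 3 → ℝ`. -/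
abbrev Pt : Type := ℝ × Vec3

/-- Euclidean dot product on ℝ³. -/
def dot3 (a b : Vec3) : ℝ := ∑ i, a i * b i

/-- Cross product on ℝ³. -/
def cross3 (a b : Vec3) : Vec3 :=
  ![a 1 * b 2 - a 2 * b 1, a 2 * b 0 - a 0 * b 2, a 0 * b 1 - a 1 * b 0]

/-- Spatial partial derivative ∂f/∂xᵢ of a scalar field. -/
def pd (i : Fin 3) (f : Pt → ℝ) (p : Pt) : ℝ :=
  fderiv ℝ (fun x => f (p.1, x)) p.2 (Pi.single i 1)

/-- Time derivative ∂f/∂t of a scalar field. -/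
def dt (f : Pt → ℝ) (p : Pt) : ℝ := deriv (fun s => f (s, p.2)) p.1

/-- Time derivative of a vector field, componentwise. -/
def dtVec (F : Pt → Vec3) (p : Pt) : Vec3 := fun i => dt (fun q => F q i) p

/-- Spatial gradient ∇f of a scalar field. -/
def grad3 (f : Pt → ℝ) (p : Pt) : Vec3 := fun i => pd i f p

/-- Spatial divergence ∇·F of a vector field. -/
def div3 (F : Pt → Vec3) (p : Pt) : ℝ := ∑ i, pd i (fun q => F q i) p

/-- Spatial curl ∇×F of a vector field. -/
def curl3 (F : Pt → Vec3) (p : Pt) : Vec3 :=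
  ![pd 1 (fun q => F q 2) p - pd 2 (fun q => F q 1) p,
    pd 2 (fun q => F q 0) p - pd 0 (fun q => F q 2) p,
    pd 0 (fun q => F q 1) p - pd 1 (fun q => F q 0) p]

/-- Directional derivative (u·∇)f of a scalar field. -/
def dirD (u : Pt → Vec3) (f : Pt → ℝ) (p : Pt) : ℝ := ∑ i, u p i * pd i f p

/-- Directional derivative (u·∇)F of a vector field. -/
def dirDVec (u F : Pt → Vec3) (p : Pt) : Vec3 :=
  fun j => ∑ i, u p i * pd i (fun q => F q j) p

/-- (∇u)ᵀ·A, the vector with i-th component ∑ⱼ (∂uʲ/∂xⁱ) Aⱼ. -/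
def gradTdot (u A : Pt → Vec3) (p : Pt) : Vec3 :=
  fun i => ∑ j, pd i (fun q => u q j) p * A p j

/-- A field is smooth when it is C^∞ jointly in time and space. -/
def SmoothS (f : Pt → ℝ) : Prop := ContDiff ℝ (⊤ : ℕ∞) f

/-- A vector field is smooth when it is C^∞ jointly in time and space. -/
def SmoothV (F : Pt → Vec3) : Prop := ContDiff ℝ (⊤ : ℕ∞) F

/-!
The two operators in the statement are the vector proxies of the Lie derivative along `u` of a
one-form `w·dx` and of a two-form `C·dS`, and the Lie derivative is a derivation of `∧`.
Concretely, with `M = ∇u`, the one-form operator is `L₁w = ∂ₜw + (u·∇)w + Mᵀw` and the two-form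
operator is `L₂C = ∂ₜC + (u·∇)C − MC + (tr M) C`. Time and convective derivatives obey the product
rule for `×`, and the stretching terms match by the cofactor identity
`Mᵀa × b + a × Mᵀb = (tr M)(a × b) − M(a × b)`. Hence `L₂(S₁ × S₂) = L₁S₁ × S₂ + S₁ × L₁S₂`,
which vanishes when both one-forms are advected.
-/

section Calculus

variable {f g : Pt → ℝ} {p : Pt}

theorem DifferentiableAt.comp_time_slice (hf : DifferentiableAt ℝ f p) :
    DifferentiableAt ℝ (fun s : ℝ => f (s, p.2)) p.1 :=
  hf.comp p.1 (differentiableAt_id.prodMk (differentiableAt_const _))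

theorem DifferentiableAt.comp_space_slice (hf : DifferentiableAt ℝ f p) :
    DifferentiableAt ℝ (fun x : Vec3 => f (p.1, x)) p.2 :=
  hf.comp p.2 ((differentiableAt_const _).prodMk differentiableAt_id)

theorem pd_add (hf : DifferentiableAt ℝ f p) (hg : DifferentiableAt ℝ g p) (i : Fin 3) :
    pd i (fun q => f q + g q) p = pd i f p + pd i g p := by
  simp only [pd, fderiv_fun_add hf.comp_space_slice hg.comp_space_slice, add_apply]

theorem pd_sub (hf : DifferentiableAt ℝ f p) (hg : DifferentiableAt ℝ g p) (i : Fin 3) :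
    pd i (fun q => f q - g q) p = pd i f p - pd i g p := by
  simp only [pd, fderiv_fun_sub hf.comp_space_slice hg.comp_space_slice, sub_apply]

theorem pd_mul (hf : DifferentiableAt ℝ f p) (hg : DifferentiableAt ℝ g p) (i : Fin 3) :
    pd i (fun q => f q * g q) p = pd i f p * g p + f p * pd i g p := by
  simp only [pd, fderiv_fun_mul hf.comp_space_slice hg.comp_space_slice,
    add_apply, smul_apply, smul_eq_mul]
  ring

theorem dt_sub (hf : DifferentiableAt ℝ f p) (hg : DifferentiableAt ℝ g p) :
    dt (fun q => f q - g q) p = dt f p - dt g p :=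
  deriv_fun_sub hf.comp_time_slice hg.comp_time_slice

theorem dt_mul (hf : DifferentiableAt ℝ f p) (hg : DifferentiableAt ℝ g p) :
    dt (fun q => f q * g q) p = dt f p * g p + f p * dt g p :=
  deriv_fun_mul hf.comp_time_slice hg.comp_time_slice

end Calculus

open Matrix

theorem transpose_mulVec_cross_add_cross_transpose_mulVec {R : Type*} [CommRing R]
    (M : Matrix (Fin 3) (Fin 3) R) (a b : Fin 3 → R) :
    (Mᵀ *ᵥ a) ⨯₃ b + a ⨯₃ (Mᵀ *ᵥ b) = M.trace • (a ⨯₃ b) - M *ᵥ (a ⨯₃ b) := by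
  ext i
  fin_cases i <;>
    simp only [cross_apply, mulVec, dotProduct, transpose_apply, Fin.sum_univ_three, trace,
      diag_apply, Pi.add_apply, Pi.sub_apply, smul_cons, smul_eq_mul, smul_empty, Fin.isValue,
      Fin.zero_eta, Fin.mk_one, Fin.reduceFinMk, cons_val, cons_val_zero, cons_val_one] <;>
    ring

theorem cross3_eq_crossProduct (a b : Vec3) : cross3 a b = a ⨯₃ b := rfl

def spatialJacobian (F : Pt → Vec3) (p : Pt) : Matrix (Fin 3) (Fin 3) ℝ :=
  Matrix.of fun j i => pd i (fun q => F q j) p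

theorem gradTdot_eq_mulVec (u A : Pt → Vec3) (p : Pt) :
    gradTdot u A p = (spatialJacobian u p)ᵀ *ᵥ A p := rfl

theorem dirDVec_eq_mulVec (A u : Pt → Vec3) (p : Pt) :
    dirDVec A u p = spatialJacobian u p *ᵥ A p := by
  ext j
  simp only [dirDVec, mulVec, dotProduct, spatialJacobian, of_apply, mul_comm]

theorem div3_eq_trace (u : Pt → Vec3) (p : Pt) : div3 u p = (spatialJacobian u p).trace := rfl

def lieDerivOneForm (u w : Pt → Vec3) (p : Pt) : Vec3 :=
  dtVec w p - cross3 (u p) (curl3 w p) + grad3 (fun q => dot3 (u q) (w q)) p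

def lieDerivTwoForm (u C : Pt → Vec3) (p : Pt) : Vec3 :=
  dtVec C p - curl3 (fun q => cross3 (u q) (C q)) p + div3 C p • u p

section LieDerivative

variable {u a b : Pt → Vec3} {p : Pt}

theorem lieDerivOneForm_eq (hu : DifferentiableAt ℝ u p) (ha : DifferentiableAt ℝ a p) :
    lieDerivOneForm u a p = dtVec a p + dirDVec u a p + gradTdot u a p := by
  ext i
  fin_cases i <;>
    simp (disch := fun_prop) only [lieDerivOneForm, dtVec, dirDVec, gradTdot, cross3, curl3,
      grad3, dot3, Fin.sum_univ_three, pd_add, pd_mul, Pi.add_apply, Pi.sub_apply, Fin.isValue,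
      Fin.zero_eta, Fin.mk_one, Fin.reduceFinMk, cons_val_zero, cons_val_one, cons_val_two,
      head_cons, tail_cons] <;>
    ring

theorem lieDerivTwoForm_eq (hu : DifferentiableAt ℝ u p) (ha : DifferentiableAt ℝ a p) :
    lieDerivTwoForm u a p = dtVec a p + dirDVec u a p - dirDVec a u p + div3 u p • a p := by
  ext i
  fin_cases i <;>
    simp (disch := fun_prop) only [lieDerivTwoForm, dtVec, dirDVec, div3, cross3, curl3,
      Fin.sum_univ_three, pd_sub, pd_mul, Pi.add_apply, Pi.sub_apply, Pi.smul_apply, smul_eq_mul,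
      Fin.isValue, Fin.zero_eta, Fin.mk_one, Fin.reduceFinMk, cons_val_zero, cons_val_one,
      cons_val_two, head_cons, tail_cons] <;>
    ring

theorem DifferentiableAt.cross3 (ha : DifferentiableAt ℝ a p) (hb : DifferentiableAt ℝ b p) :
    DifferentiableAt ℝ (fun q => cross3 (a q) (b q)) p := by
  refine differentiableAt_pi.2 fun i => ?_
  fin_cases i <;>
    simp only [_root_.cross3, Fin.isValue, Fin.zero_eta, Fin.mk_one, Fin.reduceFinMk,
      cons_val_zero, cons_val_one, cons_val_two, head_cons, tail_cons] <;>
    fun_prop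

theorem dtVec_cross3 (ha : DifferentiableAt ℝ a p) (hb : DifferentiableAt ℝ b p) :
    dtVec (fun q => cross3 (a q) (b q)) p =
      cross3 (dtVec a p) (b p) + cross3 (a p) (dtVec b p) := by
  ext i
  fin_cases i <;>
    simp (disch := fun_prop) only [dtVec, cross3, dt_sub, dt_mul, Pi.add_apply,
      Fin.isValue, Fin.zero_eta, Fin.mk_one, Fin.reduceFinMk, cons_val_zero, cons_val_one,
      cons_val_two, head_cons, tail_cons] <;>
    ring

theorem dirDVec_cross3 (ha : DifferentiableAt ℝ a p) (hb : DifferentiableAt ℝ b p) :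
    dirDVec u (fun q => cross3 (a q) (b q)) p =
      cross3 (dirDVec u a p) (b p) + cross3 (a p) (dirDVec u b p) := by
  ext i
  fin_cases i <;>
    simp (disch := fun_prop) only [dirDVec, cross3, pd_sub, pd_mul, Fin.sum_univ_three,
      Pi.add_apply, Fin.isValue, Fin.zero_eta, Fin.mk_one, Fin.reduceFinMk, cons_val_zero,
      cons_val_one, cons_val_two, head_cons, tail_cons] <;>
    ring

theorem lieDerivTwoForm_cross3 (hu : DifferentiableAt ℝ u p) (ha : DifferentiableAt ℝ a p)
    (hb : DifferentiableAt ℝ b p) :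
    lieDerivTwoForm u (fun q => cross3 (a q) (b q)) p =
      cross3 (lieDerivOneForm u a p) (b p) + cross3 (a p) (lieDerivOneForm u b p) := by
  have stretching :=
    transpose_mulVec_cross_add_cross_transpose_mulVec (spatialJacobian u p) (a p) (b p)
  rw [lieDerivTwoForm_eq hu (ha.cross3 hb), lieDerivOneForm_eq hu ha, lieDerivOneForm_eq hu hb,
    dtVec_cross3 ha hb, dirDVec_cross3 ha hb, dirDVec_eq_mulVec (fun q => cross3 (a q) (b q)),
    div3_eq_trace, gradTdot_eq_mulVec, gradTdot_eq_mulVec]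
  simp only [cross3_eq_crossProduct, map_add, LinearMap.add_apply] at stretching ⊢
  linear_combination (norm := module) -stretching

end LieDerivative

/-- the wedge product of two advected 1-forms is an advected
    2-form: C = S₁ × S₂ satisfies ∂C/∂t − ∇×(u×C) + u(∇·C) = 0. -/
theorem wedge_of_advected_one_forms
    (u S₁ S₂ : Pt → Vec3)
    (hu : SmoothV u) (hS₁ : SmoothV S₁) (hS₂ : SmoothV S₂)
    (hlie₁ : ∀ p : Pt,
      dtVec S₁ p - cross3 (u p) (curl3 S₁ p)
        + grad3 (fun q => dot3 (u q) (S₁ q)) p = 0)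
    (hlie₂ : ∀ p : Pt,
      dtVec S₂ p - cross3 (u p) (curl3 S₂ p)
        + grad3 (fun q => dot3 (u q) (S₂ q)) p = 0) :
    ∀ p : Pt,
      dtVec (fun q => cross3 (S₁ q) (S₂ q)) p
        - curl3 (fun q => cross3 (u q) (cross3 (S₁ q) (S₂ q))) p
        + div3 (fun q => cross3 (S₁ q) (S₂ q)) p • u p = 0 := by
  intro p
  have smooth_diffAt {F : Pt → Vec3} (hF : SmoothV F) : DifferentiableAt ℝ F p :=
    hF.differentiable (by simp) p
  calc _ = lieDerivTwoForm u (fun q => cross3 (S₁ q) (S₂ q)) p := rfl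
    _ = cross3 (lieDerivOneForm u S₁ p) (S₂ p) + cross3 (S₁ p) (lieDerivOneForm u S₂ p) :=
      lieDerivTwoForm_cross3 (smooth_diffAt hu) (smooth_diffAt hS₁) (smooth_diffAt hS₂)
    _ = 0 := by
      rw [lieDerivOneForm, lieDerivOneForm, hlie₁ p, hlie₂ p, cross3_eq_crossProduct,
        cross3_eq_crossProduct, map_zero, LinearMap.zero_apply, map_zero, add_zero]
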